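/- arXiv:0806.0050 — 2 statements merged into one kernel-verified Lean document; each statement's English description precedes it below -/
import Mathlib

section
/- Every 4-dimensional doubly even binary linear code in (ZMod 2)^8 is permutation-equivalent to e_8: for any doubly even ℤ/2-linear subspace C of (ZMod 2)^8 of dimension 4, there exists a permutation σ of the 8 coordinates such that permuting the coordinates of all codewords of e_8 by σ yields exactly C. -/
/-!
Since `wt (x + y) = wt x + wt y - 2 * wt (x * y)`, a doubly even code is self-orthogonal for the
dot product, and having dimension half its length, `C` is self-dual. Hence the all-ones word,
orthogonal to every even-weight word, lies in `C`; and no two coordinates `j ≠ j'` agree on all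
of `C`, as otherwise the weight-2 word `eⱼ + eⱼ'` would lie in `C^⊥ = C`. Extending `1` to a basis
`1, d₀, d₁, d₂` of `C`, the columns `j ↦ (d₀ j, d₁ j, d₂ j)` are thus eight distinct vectors of
`(ZMod 2)^3`, i.e. all of them. The same holds for `e8`, and matching columns gives the permutation.
-/

/-- The weight of a vector in `(ZMod 2)^N`: the number of coordinates equal to `1`. -/
def wt {N : ℕ} (v : Fin N → ZMod 2) : ℕ :=
  (Finset.univ.filter (fun i => v i = 1)).card

/-- The code `e₈ ⊆ (ZMod 2)^8`, spanned by 11110000, 00111100, 00001111, 10101010. -/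
def e8 : Submodule (ZMod 2) (Fin 8 → ZMod 2) :=
  Submodule.span (ZMod 2)
    {![1,1,1,1,0,0,0,0], ![0,0,1,1,1,1,0,0], ![0,0,0,0,1,1,1,1], ![1,0,1,0,1,0,1,0]}

open Module Submodule Function Set

theorem LinearMap.BilinForm.orthogonal_eq_self_of_le_orthogonal {K V : Type*} [Field K]
    [AddCommGroup V] [Module K V] [FiniteDimensional K V] {B : LinearMap.BilinForm K V}
    (hB : B.Nondegenerate) {W : Submodule K V} (hW : W ≤ B.orthogonal W)
    (hdim : 2 * finrank K W = finrank K V) : B.orthogonal W = W :=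
  (eq_of_le_of_finrank_le hW (by rw [finrank_orthogonal hB]; omega)).symm

theorem dotProductBilin_nondegenerate {K ι : Type*} [CommSemiring K] [Fintype ι] :
    (dotProductBilin K K : LinearMap.BilinForm K (ι → K)).Nondegenerate := by
  classical
  constructor <;> intro v hv <;> funext i
  · simpa using hv (Pi.single i 1)
  · simpa using hv (Pi.single i 1)

theorem exists_linearIndependent_fin_cons_of_lt_finrank {K V : Type*} [DivisionRing K]
    [AddCommGroup V] [Module K V] {x : V} (hx : x ≠ 0) :
    ∀ {m : ℕ}, m < finrank K V → ∃ d : Fin m → V, LinearIndependent K (Fin.cons x d)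
  | 0, _ => ⟨Fin.elim0, linearIndependent_unique_iff (ι := Fin 1) |>.2 hx⟩
  | m + 1, hm => by
    obtain ⟨d, hd⟩ :=
      exists_linearIndependent_fin_cons_of_lt_finrank (K := K) hx (m := m) (by omega)
    obtain ⟨y, hy⟩ := exists_linearIndependent_snoc_of_lt_finrank hd hm
    exact ⟨Fin.snoc d y, by rwa [Fin.cons_snoc_eq_snoc_cons]⟩

theorem Submodule.exists_span_insert_eq {K V : Type*} [DivisionRing K] [AddCommGroup V]
    [Module K V] (W : Submodule K V) [FiniteDimensional K W] {n : ℕ} (hW : finrank K W = n + 1)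
    {x : V} (hxW : x ∈ W) (hx : x ≠ 0) :
    ∃ d : Fin n → V, span K (insert x (range d)) = W := by
  obtain ⟨d, hd⟩ := exists_linearIndependent_fin_cons_of_lt_finrank (K := K)
    (x := (⟨x, hxW⟩ : W)) (by simpa using hx) (m := n) (by omega)
  refine ⟨W.subtype ∘ d, ?_⟩
  have htop := hd.span_eq_top_of_card_eq_finrank' (by simp [hW])
  rw [range_comp, show x = W.subtype ⟨x, hxW⟩ from rfl, ← image_insert_eq, ← Fin.range_cons,
    span_image, htop, map_subtype_top]

theorem exists_mem_apply_ne_of_mem_span {R α : Type*} [Semiring R] {S : Set (α → R)}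
    {c : α → R} (hc : c ∈ span R S) {j j' : α} (h : c j ≠ c j') : ∃ s ∈ S, s j ≠ s j' := by
  by_contra! hS
  have hle : span R S ≤ LinearMap.eqLocus (LinearMap.proj (R := R) j) (LinearMap.proj j') :=
    span_le.2 hS
  exact h (hle hc)

theorem exists_perm_comp_eq_of_bijective {α ι R : Type*} {d g : ι → α → R}
    (hd : Bijective (swap d)) (hg : Bijective (swap g)) :
    ∃ σ : Equiv.Perm α, ∀ k, g k ∘ σ = d k := by
  refine ⟨(Equiv.ofBijective _ hd).trans (Equiv.ofBijective _ hg).symm,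
    fun k => funext fun j => ?_⟩
  exact congrFun ((Equiv.ofBijective _ hg).apply_symm_apply (swap d j)) k

theorem map_funLeft_span_insert_one {R α ι : Type*} [Semiring R] {d g : ι → α → R}
    {σ : Equiv.Perm α} (h : ∀ k, g k ∘ σ = d k) :
    map (LinearMap.funLeft R R σ) (span R (insert 1 (range g))) = span R (insert 1 (range d)) := by
  rw [map_span, image_insert_eq, ← range_comp]
  congr 3
  exact funext h

theorem injective_swap_of_span_insert_one_eq {R α : Type*} [Semiring R] {C : Submodule R (α → R)}
    (hC : ∀ j j', j ≠ j' → ∃ c ∈ C, c j ≠ c j') {n : ℕ} {d : Fin n → α → R}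
    (hd : span R (insert 1 (range d)) = C) : Injective (swap d) := by
  intro j j' hjj'
  by_contra hne
  obtain ⟨c, hc, hcne⟩ := hC j j' hne
  obtain ⟨s, hs, hsne⟩ := exists_mem_apply_ne_of_mem_span (hd ▸ hc) hcne
  rcases hs with rfl | ⟨k, rfl⟩
  · exact hsne rfl
  · exact hsne (congrFun hjj' k)

abbrev dualCode {K ι : Type*} [CommSemiring K] [Fintype ι] (C : Submodule K (ι → K)) :
    Submodule K (ι → K) :=
  LinearMap.BilinForm.orthogonal (dotProductBilin K K) C

section Weight

variable {N : ℕ}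

theorem wt_eq_sum_val (v : Fin N → ZMod 2) : wt v = ∑ i, (v i).val := by
  rw [wt, Finset.card_filter]
  refine Finset.sum_congr rfl fun i _ => ?_
  generalize v i = a
  fin_cases a <;> rfl

theorem wt_add_add_two_mul_wt_mul (x y : Fin N → ZMod 2) :
    wt (x + y) + 2 * wt (x * y) = wt x + wt y := by
  simp only [wt_eq_sum_val, Finset.mul_sum, ← Finset.sum_add_distrib, Pi.add_apply, Pi.mul_apply]
  refine Finset.sum_congr rfl fun i _ => ?_
  generalize x i = a
  generalize y i = b
  revert a b
  decide

theorem natCast_wt (v : Fin N → ZMod 2) : (wt v : ZMod 2) = ∑ i, v i := by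
  simp [wt_eq_sum_val]

theorem dotProduct_eq_natCast_wt_mul (x y : Fin N → ZMod 2) : x ⬝ᵥ y = wt (x * y) := by
  rw [natCast_wt]
  rfl

theorem wt_single_add_single {j j' : Fin N} (h : j ≠ j') :
    wt (Pi.single j 1 + Pi.single j' 1 : Fin N → ZMod 2) = 2 := by
  rw [wt]
  convert Finset.card_pair h
  ext i
  by_cases hi : i = j <;> by_cases hi' : i = j' <;> simp_all [Pi.single_apply]

variable {C : Submodule (ZMod 2) (Fin N → ZMod 2)}

theorem le_dualCode_of_four_dvd_wt (hC : ∀ c ∈ C, 4 ∣ wt c) : C ≤ dualCode C := by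
  intro y hy
  rw [LinearMap.BilinForm.mem_orthogonal_iff]
  intro x hx
  rw [dotProductBilin_apply_apply, dotProduct_eq_natCast_wt_mul, ZMod.natCast_eq_zero_iff]
  have hsum := wt_add_add_two_mul_wt_mul x y
  have hx4 := hC x hx
  have hy4 := hC y hy
  have hxy4 := hC (x + y) (add_mem hx hy)
  omega

theorem one_mem_dualCode_of_two_dvd_wt (hC : ∀ c ∈ C, 2 ∣ wt c) : 1 ∈ dualCode C := by
  rw [LinearMap.BilinForm.mem_orthogonal_iff]
  intro c hc
  rw [dotProductBilin_apply_apply, dotProduct_one, ← natCast_wt, ZMod.natCast_eq_zero_iff]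
  exact hC c hc

theorem exists_apply_ne_of_dualCode_eq_self (hC : ∀ c ∈ C, 4 ∣ wt c)
    (hself : dualCode C = C) {j j' : Fin N} (h : j ≠ j') : ∃ c ∈ C, c j ≠ c j' := by
  have hv : Pi.single j 1 + Pi.single j' 1 ∉ dualCode C := by
    rw [hself]
    intro hv
    have h4 := hC _ hv
    rw [wt_single_add_single h] at h4
    omega
  simp only [LinearMap.BilinForm.mem_orthogonal_iff, dotProductBilin_apply_apply,
    not_forall] at hv
  obtain ⟨c, hc, hne⟩ := hv
  refine ⟨c, hc, fun heq => hne ?_⟩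
  simp [dotProduct_add, heq, CharTwo.add_self_eq_zero]

end Weight

def e8Rows : Fin 3 → Fin 8 → ZMod 2 :=
  ![![1,1,1,1,0,0,0,0], ![0,0,1,1,1,1,0,0], ![1,0,1,0,1,0,1,0]]

theorem bijective_swap_e8Rows : Bijective (swap e8Rows) :=
  (Fintype.bijective_iff_injective_and_card _).2 ⟨by decide, rfl⟩

theorem e8_eq_span : e8 = span (ZMod 2) (insert 1 (range e8Rows)) := by
  simp only [e8, e8Rows, Matrix.range_cons, Matrix.range_empty, union_empty, singleton_union]
  refine le_antisymm (span_le.2 ?_) (span_le.2 ?_) <;>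
    simp only [insert_subset_iff, singleton_subset_iff, SetLike.mem_coe]
  · have h : (![0,0,0,0,1,1,1,1] : Fin 8 → ZMod 2) = 1 + ![1,1,1,1,0,0,0,0] := by decide
    refine ⟨subset_span (by simp), subset_span (by simp), ?_, subset_span (by simp)⟩
    exact h ▸ add_mem (subset_span (by simp)) (subset_span (by simp))
  · have h : (1 : Fin 8 → ZMod 2) = ![1,1,1,1,0,0,0,0] + ![0,0,0,0,1,1,1,1] := by decide
    refine ⟨?_, subset_span (by simp), subset_span (by simp), subset_span (by simp)⟩
    exact h ▸ add_mem (subset_span (by simp)) (subset_span (by simp))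

/-- Every 4-dimensional doubly even binary linear code of length 8 is
permutation-equivalent to `e₈`: there is a permutation `σ` of the 8 coordinates such that
permuting the coordinates of all codewords of `e₈` by `σ` yields exactly `C`. -/
theorem doublyEven_dim4_len8_perm_equiv_e8 (C : Submodule (ZMod 2) (Fin 8 → ZMod 2))
    (hde : ∀ c ∈ C, 4 ∣ wt c)
    (hdim : Module.finrank (ZMod 2) C = 4) :
    ∃ σ : Equiv.Perm (Fin 8),
      Submodule.map (LinearMap.funLeft (ZMod 2) (ZMod 2) σ) e8 = C := by
  have hself := LinearMap.BilinForm.orthogonal_eq_self_of_le_orthogonal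
    dotProductBilin_nondegenerate (le_dualCode_of_four_dvd_wt hde) (by simp [hdim])
  have hone : 1 ∈ C :=
    hself ▸ one_mem_dualCode_of_two_dvd_wt fun c hc => (by norm_num : 2 ∣ 4).trans (hde c hc)
  obtain ⟨d, hspan⟩ := C.exists_span_insert_eq hdim hone one_ne_zero
  have hd : Bijective (swap d) := (Fintype.bijective_iff_injective_and_card _).2
    ⟨injective_swap_of_span_insert_one_eq
      (fun _ _ => exists_apply_ne_of_dualCode_eq_self hde hself) hspan, rfl⟩
  obtain ⟨σ, hσ⟩ := exists_perm_comp_eq_of_bijective hd bijective_swap_e8Rows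
  exact ⟨σ, by rw [e8_eq_span, map_funLeft_span_insert_one hσ, hspan]⟩
end

section
/- The automorphism group of the code e_7 has order 168: the set of permutations σ of the 7 coordinate positions such that permuting the coordinates of every codeword of e_7 by σ again yields a codeword of e_7 forms a group of cardinality 168. -/
/-- The code `e₇ ⊆ (ZMod 2)^7`, spanned by 1111000, 0011110, 1010101. -/
def e7 : Submodule (ZMod 2) (Fin 7 → ZMod 2) :=
  Submodule.span (ZMod 2) {![1,1,1,1,0,0,0], ![0,0,1,1,1,1,0], ![1,0,1,0,1,0,1]}

/-!
The columns of the generator matrix of `e₇` are the seven nonzero vectors of `𝔽₂³`, each once,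
so `e₇` is the binary simplex code of dimension 3. A permutation `σ` preserves the row space of
a generator matrix `M` iff some square matrix `B` sends column `i` of `M` to column `σ i`: the
rows of `B` express the permuted rows of `M` in terms of the rows of `M`. When the columns are
exactly the nonzero vectors, such a `B` hits every vector and is therefore invertible, and
conversely every invertible matrix permutes the nonzero vectors. This identifies `Aut(e₇)` with
`GL₃(𝔽₂)`, of order `(8 - 1)(8 - 2)(8 - 4) = 168`.
-/

open Matrix

namespace Matrix

variable {K κ ι : Type*} [CommRing K] [Fintype κ]

theorem comp_mem_range_vecMulLinear_iff (M : Matrix κ ι K) (σ : ι → ι) :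
    (∀ v ∈ LinearMap.range M.vecMulLinear, v ∘ σ ∈ LinearMap.range M.vecMulLinear) ↔
      ∃ B : Matrix κ κ K, ∀ i, B *ᵥ M.col i = M.col (σ i) := by
  constructor
  · classical
    intro h
    have hrow (r : κ) : ∃ y, y ᵥ* M = M.row r ∘ σ := h _ ⟨Pi.single r 1, single_one_vecMul r M⟩
    choose y hy using hrow
    exact ⟨Matrix.of y, fun i => funext fun r => congrFun (hy r) i⟩
  · rintro ⟨B, hB⟩ _ ⟨x, rfl⟩
    refine ⟨x ᵥ* B, funext fun i => ?_⟩
    change (x ᵥ* B) ⬝ᵥ M.col i = x ⬝ᵥ M.col (σ i)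
    rw [← hB, dotProduct_mulVec]

variable [DecidableEq κ]

namespace GeneralLinearGroup

theorem inv_mulVec_mulVec (A : GL κ K) (v : κ → K) : (↑A⁻¹ : Matrix κ κ K) *ᵥ (↑A *ᵥ v) = v := by
  rw [mulVec_mulVec, Units.inv_mul, one_mulVec]

theorem mulVec_inv_mulVec (A : GL κ K) (v : κ → K) : (↑A : Matrix κ κ K) *ᵥ (↑A⁻¹ *ᵥ v) = v :=
  inv_mulVec_mulVec A⁻¹ v

theorem mulVec_ne_zero (A : GL κ K) {v : κ → K} (hv : v ≠ 0) : (↑A : Matrix κ κ K) *ᵥ v ≠ 0 :=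
  fun h => hv <| by rw [← inv_mulVec_mulVec A v, h, mulVec_zero]

def toPermNonzero : GL κ K →* Equiv.Perm {v : κ → K // v ≠ 0} where
  toFun A :=
    { toFun := fun v => ⟨(A : Matrix κ κ K) *ᵥ (v : κ → K), mulVec_ne_zero A v.2⟩
      invFun := fun v => ⟨(↑A⁻¹ : Matrix κ κ K) *ᵥ (v : κ → K), mulVec_ne_zero A⁻¹ v.2⟩
      left_inv := fun v => Subtype.ext (inv_mulVec_mulVec A v)
      right_inv := fun v => Subtype.ext (mulVec_inv_mulVec A v) }
  map_one' := by ext; simp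
  map_mul' A B := by ext; simp [mulVec_mulVec]

end GeneralLinearGroup

section Simplex

variable (M : Matrix κ ι K) (hinj : Function.Injective M.col)
  (hrange : ∀ v, v ∈ Set.range M.col ↔ v ≠ 0)

noncomputable def colEquivNonzero : ι ≃ {v : κ → K // v ≠ 0} :=
  (Equiv.ofInjective M.col hinj).trans (Equiv.subtypeEquivRight hrange)

noncomputable def simplexPermHom : GL κ K →* Equiv.Perm ι :=
  (colEquivNonzero M hinj hrange).symm.permCongrHom.toMonoidHom.comp
    GeneralLinearGroup.toPermNonzero

theorem col_simplexPermHom_apply (A : GL κ K) (i : ι) :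
    M.col (simplexPermHom M hinj hrange A i) = A *ᵥ M.col i := by
  simp [simplexPermHom, colEquivNonzero, GeneralLinearGroup.toPermNonzero, Equiv.permCongr,
    Equiv.apply_ofInjective_symm]

theorem simplexPermHom_injective [Nontrivial K] :
    Function.Injective (simplexPermHom M hinj hrange) := by
  intro A B hAB
  have hcol (v : κ → K) (hv : v ≠ 0) : (A : Matrix κ κ K) *ᵥ v = B *ᵥ v := by
    obtain ⟨i, rfl⟩ := (hrange v).2 hv
    rw [← col_simplexPermHom_apply M hinj hrange, ← col_simplexPermHom_apply M hinj hrange, hAB]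
  refine GeneralLinearGroup.ext fun i j => ?_
  simpa [mulVec_single_one] using congrFun (hcol (Pi.single j 1) (by simp)) i

theorem card_range_simplexPermHom [Nontrivial K] :
    Nat.card (simplexPermHom M hinj hrange).range = Nat.card (GL κ K) :=
  Nat.card_congr (MonoidHom.ofInjective (simplexPermHom_injective M hinj hrange)).toEquiv.symm

theorem mem_range_simplexPermHom_iff_exists (σ : Equiv.Perm ι) :
    σ ∈ (simplexPermHom M hinj hrange).range ↔
      ∃ B : Matrix κ κ K, ∀ i, B *ᵥ M.col i = M.col (σ i) := by
  constructor
  · rintro ⟨A, rfl⟩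
    exact ⟨A, fun i => (col_simplexPermHom_apply M hinj hrange A i).symm⟩
  · rintro ⟨B, hB⟩
    have hsurj : Function.Surjective B.mulVec := by
      intro w
      by_cases hw : w = 0
      · exact ⟨0, by rw [hw, mulVec_zero]⟩
      · obtain ⟨j, rfl⟩ := (hrange w).2 hw
        obtain ⟨i, rfl⟩ := σ.surjective j
        exact ⟨M.col i, hB i⟩
    refine ⟨(mulVec_surjective_iff_isUnit.1 hsurj).unit, Equiv.ext fun i => hinj ?_⟩
    rw [col_simplexPermHom_apply]
    exact hB i

theorem mem_range_simplexPermHom_iff (σ : Equiv.Perm ι) :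
    σ ∈ (simplexPermHom M hinj hrange).range ↔
      ∀ v ∈ LinearMap.range M.vecMulLinear, v ∘ σ ∈ LinearMap.range M.vecMulLinear := by
  rw [mem_range_simplexPermHom_iff_exists, comp_mem_range_vecMulLinear_iff]

end Simplex

end Matrix

def e7Generator : Matrix (Fin 3) (Fin 7) (ZMod 2) :=
  !![1,1,1,1,0,0,0; 0,0,1,1,1,1,0; 1,0,1,0,1,0,1]

theorem e7_eq_range_vecMulLinear : e7 = LinearMap.range e7Generator.vecMulLinear := by
  rw [range_vecMulLinear]
  exact congrArg _ ((range_cons _ _).trans (by rw [range_cons_cons_empty]; rfl)).symm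

theorem e7Generator_col_injective : Function.Injective e7Generator.col := by
  decide

theorem mem_range_e7Generator_col_iff (v : Fin 3 → ZMod 2) :
    v ∈ Set.range e7Generator.col ↔ v ≠ 0 := by
  revert v
  decide

theorem card_GL_fin_three_zmod_two : Nat.card (GL (Fin 3) (ZMod 2)) = 168 := by
  rw [card_GL_field, ZMod.card]
  decide

/-- The permutations of the 7 coordinate positions which carry the set of codewords of
`e₇` onto itself form a group of order 168. -/
theorem aut_e7_card :
    ∃ G : Subgroup (Equiv.Perm (Fin 7)),
      (∀ σ : Equiv.Perm (Fin 7), σ ∈ G ↔ ∀ v ∈ e7, v ∘ σ ∈ e7) ∧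
      Nat.card G = 168 := by
  refine ⟨(simplexPermHom e7Generator e7Generator_col_injective
    mem_range_e7Generator_col_iff).range, fun σ => ?_, ?_⟩
  · rw [e7_eq_range_vecMulLinear, mem_range_simplexPermHom_iff]
  · rw [card_range_simplexPermHom, card_GL_fin_three_zmod_two]
end
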